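/- arXiv:math/0411334 — 3 statements merged into one kernel-verified Lean document; each statement's English description precedes it below -/
import Mathlib

section
/- Let n ∈ ℕ, s > 0 and Y ∈ ℝ^d. Then φ(s,s,Y) = 1, and the function s' ↦ φ(s,s',Y) has derivative 0 at s' = s (i.e. HasDerivAt (fun s' => φ(s,s',Y)) 0 s). (This is the key computation in the proof of Theorem 2.3, showing that the connection induced by the infinitesimal prequantum BKS pairing coincides with the prequantum connection δ^{prQ}.) -/
open scoped Real BigOperators

/-- `sinhc x = sinh x / x` for `x ≠ 0`, and `sinhc 0 = 1`. -/
noncomputable def sinhc (x : ℝ) : ℝ := if x = 0 then 1 else Real.sinh x / x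

/-- The function `η(Y) = ∏_{i ∈ I} sinhc (α_i Y)` (equation (5) of the paper). -/
noncomputable def eta {d : ℕ} {I : Type*} [Fintype I]
    (α : I → (EuclideanSpace ℝ (Fin d) →ₗ[ℝ] ℝ)) (Y : EuclideanSpace ℝ (Fin d)) : ℝ :=
  ∏ i, sinhc (α i Y)

/-- The function `φ(s,s',Y)` of equation (13) of the paper, with `n = dim K`. -/
noncomputable def phi {d : ℕ} {I : Type*} [Fintype I]
    (α : I → (EuclideanSpace ℝ (Fin d) →ₗ[ℝ] ℝ)) (n : ℕ) (s s' : ℝ)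
    (Y : EuclideanSpace ℝ (Fin d)) : ℝ :=
  ((s + s') / (2 * Real.sqrt (s * s'))) ^ n * (eta α (((s + s') / 2) • Y)) ^ 2 /
    (eta α (s • Y) * eta α (s' • Y))

/-! Both factors of `φ(s, ·, Y)` have the shape `t ↦ g ((s + t) / 2) ^ 2 / (g s * g t)`: the
second with `g r = η (r • Y)`, the first with `g = √` (for `s, s + t ≥ 0`). Such a ratio equals `1`
at `t = s`, and it is stationary there because the numerator and the denominator both have
derivative `g s * g' s`. -/

open Filter Topology

section MidpointRatio

variable {𝕜 : Type*} [NontriviallyNormedField 𝕜]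

def midpointRatio (g : 𝕜 → 𝕜) (s t : 𝕜) : 𝕜 := g ((s + t) / 2) ^ 2 / (g s * g t)

variable [CharZero 𝕜] {g : 𝕜 → 𝕜} {g' s : 𝕜}

lemma midpointRatio_self (hg : g s ≠ 0) : midpointRatio g s s = 1 := by
  rw [midpointRatio, add_self_div_two, sq, div_self (mul_ne_zero hg hg)]

lemma hasDerivAt_midpointRatio (hg : HasDerivAt g g' s) (hgs : g s ≠ 0) :
    HasDerivAt (midpointRatio g s) 0 s := by
  have hmid : HasDerivAt (fun t => (s + t) / 2) (1 / 2) s := by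
    simpa using ((hasDerivAt_id s).const_add s).div_const 2
  have hg_mid : HasDerivAt (fun t => g ((s + t) / 2)) (g' * (1 / 2)) s := by
    refine HasDerivAt.comp s ?_ hmid
    rwa [add_self_div_two]
  refine ((hg_mid.pow 2).div (hg.const_mul (g s)) (mul_ne_zero hgs hgs)).congr_deriv ?_
  simp only [Pi.pow_apply, add_self_div_two]
  field_simp
  ring

end MidpointRatio

lemma sinhc_pos (x : ℝ) : 0 < sinhc x := by
  rcases lt_trichotomy x 0 with h | rfl | h
  · rw [sinhc, if_neg h.ne]
    exact div_pos_of_neg_of_neg (Real.sinh_neg_iff.2 h) h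
  · simp [sinhc]
  · rw [sinhc, if_neg h.ne']
    exact div_pos (Real.sinh_pos_iff.2 h) h

lemma differentiableAt_sinhc {x : ℝ} (hx : x ≠ 0) : DifferentiableAt ℝ sinhc x := by
  have hdiff : DifferentiableAt ℝ (fun y => Real.sinh y / y) x :=
    Real.differentiable_sinh.differentiableAt.div differentiableAt_id hx
  refine hdiff.congr_of_eventuallyEq ?_
  filter_upwards [isOpen_ne.mem_nhds hx] with y hy
  simp [sinhc, hy]

section Eta

variable {d : ℕ} {I : Type*} [Fintype I] (α : I → (EuclideanSpace ℝ (Fin d) →ₗ[ℝ] ℝ))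
  (Y : EuclideanSpace ℝ (Fin d))

lemma eta_pos : 0 < eta α Y :=
  Finset.prod_pos fun _ _ => sinhc_pos _

lemma differentiableAt_eta_smul {s : ℝ} (hs : s ≠ 0) :
    DifferentiableAt ℝ (fun t : ℝ => eta α (t • Y)) s := by
  simp only [eta, map_smul, smul_eq_mul]
  refine DifferentiableAt.fun_finsetProd fun i _ => ?_
  by_cases hi : α i Y = 0
  · simp [hi]
  · exact (differentiableAt_sinhc (mul_ne_zero hs hi)).comp s
      (differentiableAt_id.mul_const (α i Y))

lemma phi_eq_midpointRatio (n : ℕ) {s t : ℝ} (hs : 0 ≤ s) (hst : 0 ≤ s + t) :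
    phi α n s t Y =
      midpointRatio Real.sqrt s t ^ n * midpointRatio (fun r : ℝ => eta α (r • Y)) s t := by
  have hsqrt : Real.sqrt ((s + t) / 2) ^ 2 = (s + t) / 2 := Real.sq_sqrt (by positivity)
  rw [phi, midpointRatio, midpointRatio, hsqrt, Real.sqrt_mul hs, mul_div_assoc,
    div_div]

end Eta

theorem statement_1_general {d : ℕ} {I : Type*} [Fintype I]
    (α : I → (EuclideanSpace ℝ (Fin d) →ₗ[ℝ] ℝ)) (n : ℕ)
    {s : ℝ} (hs : 0 < s) (Y : EuclideanSpace ℝ (Fin d)) :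
    phi α n s s Y = 1 ∧ HasDerivAt (fun s' => phi α n s s' Y) 0 s := by
  have hphi : ∀ᶠ t in 𝓝 s, phi α n s t Y =
      midpointRatio Real.sqrt s t ^ n * midpointRatio (fun r : ℝ => eta α (r • Y)) s t := by
    filter_upwards [Ioi_mem_nhds hs] with t ht
    exact phi_eq_midpointRatio α Y n hs.le (by linarith [Set.mem_Ioi.1 ht])
  have hsqrt_ne : Real.sqrt s ≠ 0 := (Real.sqrt_pos.2 hs).ne'
  have heta_ne : eta α (s • Y) ≠ 0 := (eta_pos α _).ne'
  constructor
  · rw [hphi.self_of_nhds, midpointRatio_self hsqrt_ne, midpointRatio_self heta_ne, one_pow,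
      one_mul]
  · have hsqrt := hasDerivAt_midpointRatio (Real.hasDerivAt_sqrt hs.ne') hsqrt_ne
    have heta := hasDerivAt_midpointRatio
      (differentiableAt_eta_smul α Y hs.ne').hasDerivAt heta_ne
    simpa using ((hsqrt.pow n).mul heta).congr_of_eventuallyEq hphi

/-- The key computation in the proof of Theorem 2.3: `φ(s,s,Y) = 1` and
`∂φ(s,s',Y)/∂s'` vanishes at `s' = s`. -/
theorem statement_1 {d : ℕ} (hd : 1 ≤ d) {I : Type*} [Fintype I]
    (α : I → (EuclideanSpace ℝ (Fin d) →ₗ[ℝ] ℝ)) (n : ℕ)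
    {s : ℝ} (hs : 0 < s) (Y : EuclideanSpace ℝ (Fin d)) :
    phi α n s s Y = 1 ∧ HasDerivAt (fun s' => phi α n s s' Y) 0 s :=
  statement_1_general α n hs Y
end

section
/- Let ℏ₀ > 0, let s, s' ≥ 0 with s + s' > 0, and let k, k' ∈ ℤ. Then √((s+s')/2) · ∫_ℝ ∫_0^{2π} e^{i(k'−k)x} · e^{−(ks + k's')y} · e^{−(s+s')y²/(2ℏ₀)} (dx/2π) dy = δ_{kk'} · √(πℏ₀) · e^{(s+s')ℏ₀k²/2}. (This is equation (39), ⟨σ^R_{s,ij}, σ^{R'}_{s',i'j'}⟩^{BKS} = δ_{RR'}δ_{ii'}δ_{jj'} d_R^{-1} (πℏ₀)^{n/2} e^{((s+s')/2)ℏ₀(c_R+|ρ|²)}, in the abelian case K = U(1), where the irreducible characters are z ↦ z^k, d_R = 1, c_R = k², ρ = 0; it yields Lemma 3.11 and the unitarity of the quantum BKS pairing map B^Q_{ss'} in Theorem 3.6 for U(1).) -/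
open scoped Real
open MeasureTheory Complex

/-- Equation (39) of the paper in the abelian case `K = U(1)`: the BKS pairing of
the polarized basis sections `σ^k_s = e^{ik(x+isy)} e^{−sy²/(2ℏ₀)} √Ω_s` is
`δ_{kk'} √(πℏ₀) e^{(s+s')ℏ₀k²/2}`. -/
theorem statement_4 {ℏ₀ s s' : ℝ} (hℏ : 0 < ℏ₀) (hs : 0 ≤ s) (hs' : 0 ≤ s')
    (hss' : 0 < s + s') (k k' : ℤ) :
    (Real.sqrt ((s + s') / 2) : ℂ) *
        ∫ y : ℝ, (∫ x in Set.Ioc (0 : ℝ) (2 * π),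
          Complex.exp (((k' : ℂ) - (k : ℂ)) * Complex.I * (x : ℂ)) *
            (Real.exp (-(((k : ℝ) * s + (k' : ℝ) * s') * y)) : ℂ) *
            (Real.exp (-((s + s') * y ^ 2) / (2 * ℏ₀)) : ℂ)) / (2 * (π : ℂ)) =
      (if k = k' then 1 else 0) * (Real.sqrt (π * ℏ₀) : ℂ) *
        Complex.exp (((s : ℂ) + (s' : ℂ)) * (ℏ₀ : ℂ) * (k : ℂ) ^ 2 / 2) := by
  have h2π : (0 : ℝ) ≤ 2 * π := by positivity
  have key : ∫ x in (0:ℝ)..(2*π), Complex.exp (((k' : ℂ) - (k : ℂ)) * Complex.I * (x : ℂ))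
      = if k = k' then (2 * π : ℂ) else 0 := by
    by_cases hk : k = k'
    · subst hk
      simp [intervalIntegral.integral_const]
    · rw [if_neg hk]
      have hn : ((k' : ℂ) - (k : ℂ)) ≠ 0 := by
        intro h
        apply hk
        have : ((k : ℂ)) = (k' : ℂ) := by linear_combination -h
        exact_mod_cast this
      have hc : ((k' : ℂ) - (k : ℂ)) * Complex.I ≠ 0 := by
        simp [hn, Complex.I_ne_zero]
      rw [integral_exp_mul_complex hc]
      have h1 : Complex.exp (((k' : ℂ) - (k : ℂ)) * Complex.I * (2 * π : ℝ)) = 1 := by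
        have := Complex.exp_int_mul_two_pi_mul_I (k' - k)
        rw [← this]
        push_cast
        ring_nf
      rw [h1]
      simp
  -- rewrite the inner integral
  have inner : ∀ y : ℝ, (∫ x in Set.Ioc (0 : ℝ) (2 * π),
      Complex.exp (((k' : ℂ) - (k : ℂ)) * Complex.I * (x : ℂ)) *
        (Real.exp (-(((k : ℝ) * s + (k' : ℝ) * s') * y)) : ℂ) *
        (Real.exp (-((s + s') * y ^ 2) / (2 * ℏ₀)) : ℂ))
      = (if k = k' then (2 * π : ℂ) else 0) *
        ((Real.exp (-(((k : ℝ) * s + (k' : ℝ) * s') * y)) : ℂ) *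
         (Real.exp (-((s + s') * y ^ 2) / (2 * ℏ₀)) : ℂ)) := by
    intro y
    rw [← intervalIntegral.integral_of_le h2π]
    rw [intervalIntegral.integral_mul_const, intervalIntegral.integral_mul_const, key]
    ring
  simp only [inner]
  by_cases hk : k = k'
  · subst hk
    simp only [eq_self_iff_true, if_true, one_mul]
    have hπ : (2 * (π : ℂ)) ≠ 0 := by
      simp [Real.pi_ne_zero]
    have hsimp : ∀ y : ℝ, ((2 * π : ℂ) *
        ((Real.exp (-(((k : ℝ) * s + (k : ℝ) * s') * y)) : ℂ) *
         (Real.exp (-((s + s') * y ^ 2) / (2 * ℏ₀)) : ℂ))) / (2 * (π : ℂ))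
        = Complex.exp ((-((s + s' : ℝ) / (2 * ℏ₀)) : ℂ) * (y:ℂ) ^ 2 +
            (-((k : ℝ) * (s + s')) : ℂ) * (y:ℂ) + 0) := by
      intro y
      rw [mul_div_cancel_left₀ _ hπ]
      rw [Complex.ofReal_exp, Complex.ofReal_exp, ← Complex.exp_add]
      congr 1
      push_cast
      field_simp
      ring
    simp only [hsimp]
    have hb : ((-((s + s' : ℝ) / (2 * ℏ₀)) : ℂ)).re < 0 := by
      have h1 : ((-((s + s' : ℝ) / (2 * ℏ₀)) : ℂ)) = (((-((s + s') / (2 * ℏ₀))) : ℝ) : ℂ) := by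
        push_cast; ring
      rw [h1, Complex.ofReal_re]
      have : 0 < (s + s') / (2 * ℏ₀) := by positivity
      linarith
    rw [integral_cexp_quadratic hb]
    -- now compute
    have hssne : ((s + s' : ℝ) : ℂ) ≠ 0 := by
      exact_mod_cast hss'.ne'
    have hℏne : ((ℏ₀ : ℝ) : ℂ) ≠ 0 := by exact_mod_cast hℏ.ne'
    have hbase : (π / -(-((s + s' : ℝ) / (2 * ℏ₀)) : ℂ)) = ((2 * π * ℏ₀ / (s + s') : ℝ) : ℂ) := by
      push_cast
      rw [neg_neg]
      field_simp
    rw [hbase]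
    have hpos : (0 : ℝ) ≤ 2 * π * ℏ₀ / (s + s') := by positivity
    have hcpow : ((2 * π * ℏ₀ / (s + s') : ℝ) : ℂ) ^ (1 / 2 : ℂ)
        = (Real.sqrt (2 * π * ℏ₀ / (s + s')) : ℂ) := by
      rw [Real.sqrt_eq_rpow, Complex.ofReal_cpow hpos]
      norm_num
    rw [hcpow]
    have hexp : (0 : ℂ) - ((-((k : ℝ) * (s + s')) : ℂ)) ^ 2 /
        (4 * (-((s + s' : ℝ) / (2 * ℏ₀)) : ℂ))
        = ((s : ℂ) + (s' : ℂ)) * (ℏ₀ : ℂ) * (k : ℂ) ^ 2 / 2 := by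
      have h : ((s : ℂ) + (s' : ℂ)) ≠ 0 := by push_cast at hssne; exact hssne
      have h2ℏ : (2 * (ℏ₀ : ℂ)) ≠ 0 := mul_ne_zero two_ne_zero hℏne
      have hD : (4 * (-((((s : ℂ)) + (s' : ℂ)) / (2 * (ℏ₀ : ℂ))))) ≠ 0 := by
        apply mul_ne_zero (by norm_num)
        simpa [neg_ne_zero] using div_ne_zero h h2ℏ
      push_cast
      rw [zero_sub, ← neg_div, div_eq_iff hD]
      field_simp
      ring
    rw [hexp]
    rw [← mul_assoc, ← Complex.ofReal_mul, ← Real.sqrt_mul (by positivity : (0:ℝ) ≤ (s+s')/2)]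
    congr 3
    field_simp
  · simp [hk]
end

section
/- For all s, s' > 0 and all a ∈ ℝ: sinh²((s+s')a/2) ≤ ((s+s')²/(4ss')) · sinh(sa)·sinh(s'a), where at a = 0 both sides vanish. (This per-root inequality gives the positive lower bound for the function φ of equation (13), completing the proof that φ is real, positive and bounded for fixed s, s'.) -/
open Real

lemma sinh_mul_le {c : ℝ} (hc0 : 0 ≤ c) (hc1 : c ≤ 1) {t : ℝ} (ht : 0 ≤ t) :
    Real.sinh (c * t) ≤ c * Real.sinh t := by
  have hder : ∀ x : ℝ, HasDerivAt (fun x => c * Real.sinh x - Real.sinh (c * x))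
      (c * Real.cosh x - Real.cosh (c * x) * (c * 1)) x := by
    intro x
    exact ((Real.hasDerivAt_sinh x).const_mul c).sub ((hasDerivAt_id x).const_mul c).sinh
  have hmono : MonotoneOn (fun x => c * Real.sinh x - Real.sinh (c * x)) (Set.Ici 0) := by
    apply monotoneOn_of_deriv_nonneg (convex_Ici 0)
    · fun_prop
    · intro x _
      exact (hder x).differentiableAt.differentiableWithinAt
    · intro x hx
      rw [interior_Ici] at hx
      rw [(hder x).deriv]
      have hx0 : 0 ≤ x := le_of_lt hx
      have : Real.cosh (c * x) ≤ Real.cosh x := by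
        rw [Real.cosh_le_cosh, abs_of_nonneg (mul_nonneg hc0 hx0), abs_of_nonneg hx0]
        nlinarith
      nlinarith
  have := hmono (Set.self_mem_Ici) (Set.mem_Ici.2 ht) ht
  simpa using this

lemma key_ineq {x y : ℝ} (hx : 0 < x) (hy : 0 < y) :
    Real.sinh ((x + y) / 2) ^ 2 ≤
      ((x + y) ^ 2 / (4 * x * y)) * (Real.sinh x * Real.sinh y) := by
  set u := x + y with hu
  set w := |x - y| with hw
  have hu0 : 0 < u := by positivity
  have hwu : w ≤ u := by
    rw [hw, abs_le]; constructor <;> nlinarith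
  have hw0 : 0 ≤ w := abs_nonneg _
  have hprod : Real.sinh x * Real.sinh y = (Real.cosh u - Real.cosh w) / 2 := by
    have h1 : Real.cosh u = Real.cosh x * Real.cosh y + Real.sinh x * Real.sinh y :=
      Real.cosh_add x y
    have h2 : Real.cosh w = Real.cosh x * Real.cosh y - Real.sinh x * Real.sinh y := by
      rw [hw, ← Real.cosh_abs, abs_abs, Real.cosh_abs, Real.cosh_sub]
    rw [h1, h2]; ring
  have hsq : ∀ t : ℝ, Real.sinh (t / 2) ^ 2 = (Real.cosh t - 1) / 2 := by
    intro t
    have h1 := Real.cosh_two_mul (t / 2)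
    have h2 : Real.cosh (t/2) ^ 2 = Real.sinh (t/2) ^ 2 + 1 := Real.cosh_sq (t/2)
    have ht : 2 * (t / 2) = t := by ring
    rw [ht] at h1
    nlinarith
  have hmain : u ^ 2 * (Real.cosh w - 1) ≤ w ^ 2 * (Real.cosh u - 1) := by
    have e1 : Real.cosh w - 1 = 2 * Real.sinh (w / 2) ^ 2 := by
      have := hsq w; linarith
    have e2 : Real.cosh u - 1 = 2 * Real.sinh (u / 2) ^ 2 := by
      have := hsq u; linarith
    rw [e1, e2]
    have hc : Real.sinh (w / 2) ≤ (w / u) * Real.sinh (u / 2) := by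
      have := sinh_mul_le (c := w / u) (by positivity)
        (by rw [div_le_one hu0]; exact hwu) (t := u / 2) (by positivity)
      have harg : w / u * (u / 2) = w / 2 := by field_simp
      rwa [harg] at this
    have hs0 : 0 ≤ Real.sinh (w / 2) := Real.sinh_nonneg_iff.2 (by positivity)
    have hs1 : 0 ≤ Real.sinh (u / 2) := Real.sinh_nonneg_iff.2 (by positivity)
    have hsq2 : Real.sinh (w / 2) ^ 2 ≤ ((w / u) * Real.sinh (u / 2)) ^ 2 := by
      apply sq_le_sq' (by nlinarith [mul_nonneg (div_nonneg hw0 hu0.le) hs1]) hc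
    have heq : u ^ 2 * ((w / u) * Real.sinh (u / 2)) ^ 2 = w ^ 2 * Real.sinh (u / 2) ^ 2 := by
      field_simp
    nlinarith
  have hcoshu1 : (1:ℝ) ≤ Real.cosh u := Real.one_le_cosh u
  have hw2 : w ^ 2 = (x - y) ^ 2 := sq_abs _
  have huw : u ^ 2 - w ^ 2 = 4 * x * y := by rw [hw2, hu]; ring
  rw [hprod, hsq u, div_mul_div_comm, div_le_div_iff₀ (by norm_num) (by positivity)]
  nlinarith [hmain, huw, hcoshu1]

lemma helper {s s' : ℝ} (hs : 0 < s) (hs' : 0 < s') {a : ℝ} (ha : 0 < a) :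
    Real.sinh ((s + s') * a / 2) ^ 2 ≤
      ((s + s') ^ 2 / (4 * s * s')) * (Real.sinh (s * a) * Real.sinh (s' * a)) := by
  have h := key_ineq (mul_pos hs ha) (mul_pos hs' ha)
  rw [show s * a + s' * a = (s + s') * a by ring] at h
  have hC : ((s + s') * a) ^ 2 / (4 * (s * a) * (s' * a)) = (s + s') ^ 2 / (4 * s * s') := by
    rw [mul_pow, show 4 * (s * a) * (s' * a) = (4 * s * s') * a ^ 2 by ring,
      mul_comm ((s + s') ^ 2) (a ^ 2), mul_comm (4 * s * s') (a ^ 2),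
      mul_div_mul_left _ _ (by positivity : (a : ℝ) ^ 2 ≠ 0)]
  rwa [hC] at h

/-- The per-root inequality `sinh²((s+s')a/2) ≤ ((s+s')²/(4ss')) sinh(sa) sinh(s'a)`
giving the positive lower bound for the function `φ` of equation (13). -/
theorem statement_10 {s s' : ℝ} (hs : 0 < s) (hs' : 0 < s') (a : ℝ) :
    Real.sinh ((s + s') * a / 2) ^ 2 ≤
      ((s + s') ^ 2 / (4 * s * s')) * (Real.sinh (s * a) * Real.sinh (s' * a)) := by
  rcases lt_trichotomy a 0 with ha | ha | ha
  · have h := helper hs hs' (neg_pos.2 ha)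
    rw [show (s + s') * -a / 2 = -((s + s') * a / 2) by ring,
      show s * -a = -(s * a) by ring, show s' * -a = -(s' * a) by ring,
      Real.sinh_neg, Real.sinh_neg, Real.sinh_neg, neg_mul_neg, neg_sq] at h
    exact h
  · simp [ha]
  · exact helper hs hs' ha
end
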